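/- (Real eigenfrequencies of the nondissipative system) Suppose β = 0, i.e. consider the pencil C(ζ,0) = ζ²α + 2iζθ − η. Then every ζ ∈ ℂ with det(ζ²α + 2iζθ − η) = 0 is real: Im ζ = 0. -/

import Mathlib

/-!
If `C(ζ) v = 0` with `v ≠ 0`, pairing with `v` gives the scalar equation
`ζ² a + 2iζ b − c = 0` with `a = v*αv > 0`, `c = v*ηv ≥ 0` and `b = v*θv` purely imaginary,
since `θ` is skew-Hermitian as a complex matrix. Writing `b = i s`, this is the real quadratic
`a ζ² − 2s ζ − c = 0`, whose discriminant `4s² + 4ac` is nonnegative, so both roots are real.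
-/

open Matrix
open scoped ComplexOrder

noncomputable section

variable {N : ℕ}

/-- A real matrix viewed as a complex matrix. -/
def cm (M : Matrix (Fin N) (Fin N) ℝ) : Matrix (Fin N) (Fin N) ℂ :=
  M.map Complex.ofReal

/-- The quadratic matrix pencil `C(ζ,β) = ζ²α + iζ(2θ + βR) − η`. -/
def pencil (α η θ R : Matrix (Fin N) (Fin N) ℝ) (β : ℝ) (ζ : ℂ) :
    Matrix (Fin N) (Fin N) ℂ :=
  ζ ^ 2 • cm α + (Complex.I * ζ) • ((2 : ℂ) • cm θ + (β : ℂ) • cm R) - cm η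

/-- The eigenmode trajectory `Q(t) = e^{−iζt} q`. -/
def trajQ (ζ : ℂ) (q : Fin N → ℂ) (t : ℝ) : Fin N → ℂ :=
  Complex.exp (-Complex.I * ζ * t) • q

/-- The eigenmode velocity `Q̇(t) = −iζ e^{−iζt} q`. -/
def trajQdot (ζ : ℂ) (q : Fin N → ℂ) (t : ℝ) : Fin N → ℂ :=
  (-Complex.I * ζ * Complex.exp (-Complex.I * ζ * t)) • q

/-- Kinetic energy `𝒯(Q̇,Q) = ½⟨Q̇, αQ̇⟩ + ½ Re⟨Q̇, θQ⟩`. -/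
def kinE (α θ : Matrix (Fin N) (Fin N) ℝ) (Qd Q : Fin N → ℂ) : ℝ :=
  (1 / 2) * (star Qd ⬝ᵥ (cm α *ᵥ Qd)).re + (1 / 2) * (star Qd ⬝ᵥ (cm θ *ᵥ Q)).re

/-- Potential energy `𝒱(Q̇,Q) = ½⟨Q, ηQ⟩ − ½ Re⟨Q̇, θQ⟩`. -/
def potE (η θ : Matrix (Fin N) (Fin N) ℝ) (Qd Q : Fin N → ℂ) : ℝ :=
  (1 / 2) * (star Q ⬝ᵥ (cm η *ᵥ Q)).re - (1 / 2) * (star Qd ⬝ᵥ (cm θ *ᵥ Q)).re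

theorem Complex.im_eq_zero_of_quadratic_eq_zero {a b c : ℝ} (ha : a ≠ 0)
    (hd : 0 ≤ discrim a b c) {z : ℂ} (hz : a * (z * z) + b * z + c = 0) : z.im = 0 := by
  have hs : discrim (a : ℂ) b c = (√(discrim a b c) : ℝ) * (√(discrim a b c) : ℝ) := by
    rw [← ofReal_mul, Real.mul_self_sqrt hd]; simp [discrim]
  rcases (quadratic_eq_zero_iff (ofReal_ne_zero.2 ha) hs z).1 hz with rfl | rfl <;>
    norm_cast

theorem Matrix.re_star_dotProduct_mulVec_eq_zero {n : Type*} [Fintype n] {A : Matrix n n ℂ}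
    (hA : Aᴴ = -A) (v : n → ℂ) : (star v ⬝ᵥ (A *ᵥ v)).re = 0 := by
  have h : star (star v ⬝ᵥ (A *ᵥ v)) = -(star v ⬝ᵥ (A *ᵥ v)) := by
    rw [← star_dotProduct, star_mulVec, ← dotProduct_mulVec, hA, neg_mulVec, dotProduct_neg]
  have := congrArg Complex.re h
  simp only [Complex.star_def, Complex.conj_re, Complex.neg_re] at this
  linarith

theorem im_eq_zero_of_det_quadratic_pencil_eq_zero {n : Type*} [Fintype n] [DecidableEq n]
    {A T H : Matrix n n ℂ} (hA : A.PosDef) (hT : Tᴴ = -T) (hH : H.PosSemidef) {ζ : ℂ}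
    (hdet : (ζ ^ 2 • A + (2 * Complex.I * ζ) • T - H).det = 0) : ζ.im = 0 := by
  obtain ⟨v, hv, hMv⟩ := exists_mulVec_eq_zero_iff.2 hdet
  obtain ⟨a, ha, ha'⟩ := RCLike.pos_iff_exists_ofReal.1 (hA.dotProduct_mulVec_pos hv)
  obtain ⟨c, hc, hc'⟩ := RCLike.nonneg_iff_exists_ofReal.1 (hH.dotProduct_mulVec_nonneg v)
  set s := (star v ⬝ᵥ (T *ᵥ v)).im
  have hb : star v ⬝ᵥ (T *ᵥ v) = s * Complex.I := by
    apply Complex.ext <;> simp [re_star_dotProduct_mulVec_eq_zero hT, s]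
  have hquad : ζ ^ 2 * a + 2 * Complex.I * ζ * (s * Complex.I) - c = 0 := by
    have := congrArg (star v ⬝ᵥ ·) hMv
    simpa [sub_mulVec, add_mulVec, smul_mulVec, dotProduct_sub, dotProduct_add,
      ← ha', hb, ← hc'] using this
  refine Complex.im_eq_zero_of_quadratic_eq_zero (a := a) (b := -2 * s) (c := -c) ha.ne'
    (by rw [discrim]; nlinarith [sq_nonneg s, mul_nonneg ha.le hc]) ?_
  push_cast
  linear_combination hquad - 2 * ζ * s * Complex.I_sq

theorem cm_conjTranspose (M : Matrix (Fin N) (Fin N) ℝ) : (cm M)ᴴ = cm Mᵀ := by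
  ext i j; simp [cm]

theorem cm_neg (M : Matrix (Fin N) (Fin N) ℝ) : cm (-M) = -cm M := by
  ext i j; simp [cm]

theorem real_eigenfrequencies_nondissipative_general
    {N : ℕ}
    (α η θ : Matrix (Fin N) (Fin N) ℝ)
    (hα : (cm α).PosDef) (hη : (cm η).PosSemidef) (hθ : θᵀ = -θ)
    (ζ : ℂ) (hdet : (ζ ^ 2 • cm α + (2 * Complex.I * ζ) • cm θ - cm η).det = 0) :
    ζ.im = 0 :=
  im_eq_zero_of_det_quadratic_pencil_eq_zero hα (by rw [cm_conjTranspose, hθ, cm_neg]) hη hdet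

/-- **Real eigenfrequencies of the nondissipative system.** For `β = 0`, every root `ζ` of
`det(ζ²α + 2iζθ − η) = 0` is real. -/
theorem real_eigenfrequencies_nondissipative
    {N : ℕ} (hN : 1 ≤ N)
    (α η θ : Matrix (Fin N) (Fin N) ℝ)
    (hα : (cm α).PosDef) (hη : (cm η).PosSemidef) (hθ : θᵀ = -θ)
    (ζ : ℂ) (hdet : (ζ ^ 2 • cm α + (2 * Complex.I * ζ) • cm θ - cm η).det = 0) :
    ζ.im = 0 :=
  real_eigenfrequencies_nondissipative_general α η θ hα hη hθ ζ hdet
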